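/- Let A be a real symmetric tensor of even order k and dimension n, and let λ_min(A) be its least H-eigenvalue. Then A is positive semidefinite (i.e., A x^k ≥ 0 for all x ∈ ℝ^n) if and only if λ_min(A) ≥ 0, and A is positive definite (A x^k > 0 for all x ≠ 0) if and only if λ_min(A) > 0. -/

import Mathlib

open Finset BigOperators

/-!
On the compact set `{x | ∑ xᵢᵏ = 1}` the form `A xᵏ` attains its minimum `m` at some `x₀`, and by
homogeneity `A xᵏ ≥ m ∑ xᵢᵏ` on all of `ℝⁿ`. Hence `t ↦ A (x₀ + t eᵢ)ᵏ - m ∑ⱼ (x₀ + t eᵢ)ⱼᵏ` is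
minimal at `t = 0`; as `A` is symmetric its derivative there is `k ((A x₀ᵏ⁻¹)ᵢ - m x₀ᵢᵏ⁻¹)`, so
`x₀` is an H-eigenvector with eigenvalue `m`. On the other hand Euler's identity gives
`A xᵏ = λ ∑ xᵢᵏ` for every H-eigenpair `(λ, x)`, so `λ ≥ m`. Thus `λ_min(A) = m`, and both
equivalences follow from `A xᵏ ≥ λ_min(A) ∑ xᵢᵏ`.
-/

/-- The value `A x^k = ∑ a_{i1...ik} x_{i1} ⋯ x_{ik}` of a tensor on a vector. -/
def tApply {n k : ℕ} (A : (Fin k → Fin n) → ℝ) (x : Fin n → ℝ) : ℝ :=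
  ∑ f : Fin k → Fin n, A f * ∏ j, x (f j)

/-- A tensor is symmetric if its entries are invariant under permutations of the indices. -/
def SymT {n k : ℕ} (A : (Fin k → Fin n) → ℝ) : Prop :=
  ∀ (σ : Equiv.Perm (Fin k)) (f : Fin k → Fin n), A (f ∘ σ) = A f

/-- The H-eigenvector equation `(A x^{k-1})_i = lam * x_i^{k-1}` for all `i`. -/
def tEig {n k : ℕ} [NeZero k] (A : (Fin k → Fin n) → ℝ) (lam : ℝ) (x : Fin n → ℝ) : Prop :=
  ∀ i : Fin n,
    (∑ f : Fin k → Fin n,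
      if f 0 = i then A f * ∏ j ∈ Finset.univ.erase (0 : Fin k), x (f j) else 0)
    = lam * x i ^ (k - 1)

/-- The set of H-eigenvalues of a tensor. -/
def specT {n k : ℕ} [NeZero k] (A : (Fin k → Fin n) → ℝ) : Set ℝ :=
  {lam | ∃ x : Fin n → ℝ, x ≠ 0 ∧ tEig A lam x}

/-- The least H-eigenvalue of a tensor. -/
noncomputable def lamMinT {n k : ℕ} [NeZero k] (A : (Fin k → Fin n) → ℝ) : ℝ :=
  sInf (specT A)

/-- The vector `A x^{k-1}`, so that `tEig A lam x` reads `A x^{k-1} = lam x^{[k-1]}`. -/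
def tGrad {n k : ℕ} [NeZero k] (A : (Fin k → Fin n) → ℝ) (x : Fin n → ℝ) (i : Fin n) : ℝ :=
  ∑ f : Fin k → Fin n,
    if f 0 = i then A f * ∏ j ∈ univ.erase (0 : Fin k), x (f j) else 0

def powSum {n : ℕ} (k : ℕ) (x : Fin n → ℝ) : ℝ :=
  ∑ i, x i ^ k

section

variable {n k : ℕ}

theorem powSum_smul (c : ℝ) (x : Fin n → ℝ) : powSum k (c • x) = c ^ k * powSum k x := by
  simp [powSum, mul_pow, mul_sum]

theorem powSum_zero [NeZero k] : powSum k (0 : Fin n → ℝ) = 0 := by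
  simp [powSum, NeZero.ne k]

theorem powSum_nonneg (hk : Even k) (x : Fin n → ℝ) : 0 ≤ powSum k x :=
  sum_nonneg fun i _ => hk.pow_nonneg (x i)

theorem powSum_pos (hk : Even k) {x : Fin n → ℝ} (hx : x ≠ 0) : 0 < powSum k x := by
  obtain ⟨i, hi⟩ := Function.ne_iff.1 hx
  exact sum_pos' (fun j _ => hk.pow_nonneg (x j)) ⟨i, mem_univ i, hk.pow_pos hi⟩

theorem isCompact_powSum_eq_one [NeZero k] (hk : Even k) :
    IsCompact {x : Fin n → ℝ | powSum k x = 1} := by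
  refine (isCompact_closedBall 0 1).of_isClosed_subset
    (isClosed_eq (by unfold powSum; fun_prop) continuous_const) fun x hx => ?_
  rw [Metric.mem_closedBall, dist_zero_right, pi_norm_le_iff_of_nonneg zero_le_one]
  intro i
  have hxi : |x i| ^ k ≤ 1 := by
    rw [hk.pow_abs, ← hx]
    exact single_le_sum (fun j _ => hk.pow_nonneg (x j)) (mem_univ i)
  exact (pow_le_one_iff_of_nonneg (abs_nonneg _) (NeZero.ne k)).1 hxi

theorem tApply_smul (A : (Fin k → Fin n) → ℝ) (c : ℝ) (x : Fin n → ℝ) :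
    tApply A (c • x) = c ^ k * tApply A x := by
  simp only [tApply, mul_sum, Pi.smul_apply, smul_eq_mul, prod_mul_distrib,
    prod_const, card_univ, Fintype.card_fin]
  exact sum_congr rfl fun f _ => by ring

theorem tApply_zero [NeZero k] (A : (Fin k → Fin n) → ℝ) : tApply A 0 = 0 := by
  simpa [NeZero.ne k] using tApply_smul A 0 0

theorem continuous_tApply (A : (Fin k → Fin n) → ℝ) : Continuous (tApply A) := by
  unfold tApply
  fun_prop

theorem sum_tGrad_mul [NeZero k] (A : (Fin k → Fin n) → ℝ) (x v : Fin n → ℝ) :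
    ∑ i, tGrad A x i * v i = ∑ f, A f * (∏ j ∈ univ.erase 0, x (f j)) * v (f 0) := by
  simp only [tGrad, sum_mul, ite_mul, zero_mul]
  rw [sum_comm]
  simp

theorem sum_tGrad_mul_self [NeZero k] (A : (Fin k → Fin n) → ℝ) (x : Fin n → ℝ) :
    ∑ i, tGrad A x i * x i = tApply A x := by
  rw [sum_tGrad_mul, tApply]
  refine sum_congr rfl fun f _ => ?_
  rw [mul_assoc, mul_comm _ (x (f 0)), mul_prod_erase _ (fun j => x (f j)) (mem_univ 0)]

theorem tApply_eq_of_tEig [NeZero k] {A : (Fin k → Fin n) → ℝ} {lam : ℝ} {x : Fin n → ℝ}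
    (hx : tEig A lam x) : tApply A x = lam * powSum k x := by
  rw [← sum_tGrad_mul_self, powSum, mul_sum]
  refine sum_congr rfl fun i _ => ?_
  rw [show tGrad A x i = lam * x i ^ (k - 1) from hx i, mul_assoc, ← pow_succ,
    Nat.sub_add_cancel NeZero.one_le]

theorem SymT.sum_prod_erase_mul [NeZero k] {A : (Fin k → Fin n) → ℝ} (hA : SymT A)
    (x v : Fin n → ℝ) (l : Fin k) :
    ∑ f, A f * (∏ j ∈ univ.erase l, x (f j)) * v (f l) =
      ∑ f, A f * (∏ j ∈ univ.erase 0, x (f j)) * v (f 0) := by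
  let σ := Equiv.swap (0 : Fin k) l
  refine Fintype.sum_equiv (σ.arrowCongr (Equiv.refl _)) _ _ fun f => ?_
  have hf : σ.arrowCongr (Equiv.refl _) f = f ∘ σ := by
    ext j
    simp [σ, Equiv.arrowCongr_apply, Equiv.symm_swap]
  have hprod : ∏ j ∈ univ.erase 0, x (f (σ j)) = ∏ j ∈ univ.erase l, x (f j) :=
    prod_equiv σ (by simp [σ, Equiv.swap_apply_eq_iff]) fun _ _ => rfl
  rw [hf, hA, Function.comp_apply, Function.comp_def, hprod, Equiv.swap_apply_left]

theorem hasDerivAt_add_smul_apply (x v : Fin n → ℝ) (i : Fin n) :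
    HasDerivAt (fun t : ℝ => (x + t • v) i) (v i) 0 :=
  (hasDerivAt_mul_const (v i)).const_add (x i)

theorem hasDerivAt_powSum_add_smul (x v : Fin n → ℝ) :
    HasDerivAt (fun t : ℝ => powSum k (x + t • v)) (k * ∑ i, x i ^ (k - 1) * v i) 0 := by
  unfold powSum
  refine (HasDerivAt.fun_sum fun i _ => (hasDerivAt_add_smul_apply x v i).pow k).congr_deriv ?_
  simp [mul_sum, mul_assoc]

theorem hasDerivAt_tApply_add_smul (A : (Fin k → Fin n) → ℝ) (x v : Fin n → ℝ) :
    HasDerivAt (fun t : ℝ => tApply A (x + t • v))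
      (∑ f, A f * ∑ l, (∏ j ∈ univ.erase l, x (f j)) * v (f l)) 0 := by
  unfold tApply
  refine HasDerivAt.fun_sum fun f _ => ((HasDerivAt.fun_finsetProd fun l _ =>
    hasDerivAt_add_smul_apply x v (f l)).const_mul (A f)).congr_deriv ?_
  simp

theorem SymT.hasDerivAt_tApply_add_smul [NeZero k] {A : (Fin k → Fin n) → ℝ} (hA : SymT A)
    (x v : Fin n → ℝ) :
    HasDerivAt (fun t : ℝ => tApply A (x + t • v)) (k * ∑ i, tGrad A x i * v i) 0 := by
  refine (_root_.hasDerivAt_tApply_add_smul A x v).congr_deriv ?_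
  calc ∑ f, A f * ∑ l, (∏ j ∈ univ.erase l, x (f j)) * v (f l)
      = ∑ l, ∑ f, A f * (∏ j ∈ univ.erase l, x (f j)) * v (f l) := by
        simp only [mul_sum, ← mul_assoc]
        exact sum_comm
    _ = ∑ _l : Fin k, ∑ f, A f * (∏ j ∈ univ.erase 0, x (f j)) * v (f 0) := by
        simp only [hA.sum_prod_erase_mul]
    _ = k * ∑ i, tGrad A x i * v i := by simp [sum_tGrad_mul]

theorem ne_zero_of_powSum_eq_one [NeZero k] {x : Fin n → ℝ} (hx : powSum k x = 1) : x ≠ 0 := by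
  rintro rfl
  simp [powSum_zero] at hx

theorem exists_isMinOn_tApply [NeZero k] (hk : Even k) (hn : 0 < n) (A : (Fin k → Fin n) → ℝ) :
    ∃ x₀ ∈ {x : Fin n → ℝ | powSum k x = 1}, IsMinOn (tApply A) {x | powSum k x = 1} x₀ :=
  (isCompact_powSum_eq_one hk).exists_isMinOn
    ⟨Pi.single ⟨0, hn⟩ 1, by simp [powSum, Pi.single_apply, ite_pow, NeZero.ne k]⟩
    (continuous_tApply A).continuousOn

theorem IsMinOn.mul_powSum_le_tApply [NeZero k] (hk : Even k) {A : (Fin k → Fin n) → ℝ}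
    {x₀ : Fin n → ℝ} (hmin : IsMinOn (tApply A) {x | powSum k x = 1} x₀) (x : Fin n → ℝ) :
    tApply A x₀ * powSum k x ≤ tApply A x := by
  rcases eq_or_ne x 0 with rfl | hx
  · simp [powSum_zero, tApply_zero]
  have hpos := powSum_pos hk hx
  set r := powSum k x ^ (k : ℝ)⁻¹
  have hr : r ^ k = powSum k x := Real.rpow_inv_natCast_pow hpos.le (NeZero.ne k)
  have hunit : powSum k (r⁻¹ • x) = 1 := by
    rw [powSum_smul, inv_pow, hr, inv_mul_cancel₀ hpos.ne']
  have hle : tApply A x₀ ≤ tApply A (r⁻¹ • x) := hmin hunit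
  rwa [tApply_smul, inv_pow, hr, le_inv_mul_iff₀' hpos] at hle

theorem IsMinOn.tEig [NeZero k] (hk : Even k) {A : (Fin k → Fin n) → ℝ} (hA : SymT A)
    {x₀ : Fin n → ℝ} (hmin : IsMinOn (tApply A) {x | powSum k x = 1} x₀)
    (hx₀ : powSum k x₀ = 1) : tEig A (tApply A x₀) x₀ := by
  intro i
  set m := tApply A x₀ with hm
  let e : Fin n → ℝ := Pi.single i 1
  have hmin₀ : IsLocalMin (fun t : ℝ => tApply A (x₀ + t • e) - m * powSum k (x₀ + t • e)) 0 :=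
    Filter.Eventually.of_forall fun t => by
      simpa only [zero_smul, add_zero, hx₀, mul_one, hm, sub_self, sub_nonneg]
        using hmin.mul_powSum_le_tApply hk (x₀ + t • e)
  have hderiv := hmin₀.hasDerivAt_eq_zero ((hA.hasDerivAt_tApply_add_smul x₀ e).sub
    ((hasDerivAt_powSum_add_smul x₀ e).const_mul m))
  simp only [e, Pi.single_apply, mul_ite, mul_one, mul_zero, sum_ite_eq',
    mem_univ, if_true] at hderiv
  have hk₀ : (k : ℝ) ≠ 0 := Nat.cast_ne_zero.2 (NeZero.ne k)
  show tGrad A x₀ i = m * x₀ i ^ (k - 1)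
  apply mul_left_cancel₀ hk₀
  linarith

theorem IsMinOn.lamMinT_eq [NeZero k] (hk : Even k) {A : (Fin k → Fin n) → ℝ} (hA : SymT A)
    {x₀ : Fin n → ℝ} (hmin : IsMinOn (tApply A) {x | powSum k x = 1} x₀)
    (hx₀ : powSum k x₀ = 1) : lamMinT A = tApply A x₀ := by
  refine IsLeast.csInf_eq ⟨⟨x₀, ne_zero_of_powSum_eq_one hx₀, hmin.tEig hk hA hx₀⟩, ?_⟩
  rintro lam ⟨x, hx, hlam⟩
  have hle := hmin.mul_powSum_le_tApply hk x
  rw [tApply_eq_of_tEig hlam] at hle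
  exact le_of_mul_le_mul_right hle (powSum_pos hk hx)

end

/-- A real symmetric tensor of even order is positive semidefinite iff its least
H-eigenvalue is nonnegative, and positive definite iff it is positive. -/
theorem stmt11 {n k : ℕ} [NeZero k] (hk : Even k) (hn : 0 < n)
    (A : (Fin k → Fin n) → ℝ) (hA : SymT A) :
    ((∀ x : Fin n → ℝ, 0 ≤ tApply A x) ↔ 0 ≤ lamMinT A) ∧
    ((∀ x : Fin n → ℝ, x ≠ 0 → 0 < tApply A x) ↔ 0 < lamMinT A) := by
  obtain ⟨x₀, hx₀, hmin⟩ := exists_isMinOn_tApply hk hn A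
  have hbound := hmin.mul_powSum_le_tApply hk
  rw [hmin.lamMinT_eq hk hA hx₀]
  refine ⟨⟨fun h => h x₀, fun h x => ?_⟩,
    ⟨fun h => h x₀ (ne_zero_of_powSum_eq_one hx₀), fun h x hx => ?_⟩⟩
  · exact (mul_nonneg h (powSum_nonneg hk x)).trans (hbound x)
  · exact (mul_pos h (powSum_pos hk hx)).trans_le (hbound x)
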